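/- Let q ∈ ℂ with q^{2k} ≠ 1 for 1 ≤ k ≤ ℓ. Define the projectors P^{(ℓ)} = Σ_{n=0}^{ℓ} ||ℓ,n⟩⟨ℓ,n|| and ~P^{(ℓ)} = Σ_{n=0}^{ℓ} ~||ℓ,n⟩⟨ℓ,n|| on (ℂ²)^{⊗ℓ}. Then: (i) (P^{(ℓ)})² = P^{(ℓ)}; (ii) (~P^{(ℓ)})² = ~P^{(ℓ)}; (iii) P^{(ℓ)} ~P^{(ℓ)} = P^{(ℓ)}; (iv) ~P^{(ℓ)} P^{(ℓ)} = ~P^{(ℓ)}. -/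

import Mathlib

open Matrix Complex Finset Filter

noncomputable section

/-- q-integer `[n]_q = (q^n - q^{-n})/(q - q⁻¹)`. -/
def qint (q : ℂ) (n : ℕ) : ℂ := (q ^ n - q⁻¹ ^ n) / (q - q⁻¹)

/-- q-factorial `[n]_q!`. -/
def qfact (q : ℂ) (n : ℕ) : ℂ := ∏ k ∈ Finset.range n, qint q (k + 1)

/-- q-binomial coefficient `[m ¦ n]_q`. -/
def qbinom (q : ℂ) (m n : ℕ) : ℂ := qfact q m / (qfact q (m - n) * qfact q n)

/-- The set of positions where the configuration `c` equals `1`. -/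
def oneSet {m : ℕ} (c : Fin m → Fin 2) : Finset (Fin m) :=
  Finset.univ.filter fun i => c i = 1

/-- The exponent `Σ(S) − n m + n(n−1)/2` (positions counted `1,…,m`). -/
def expKet (m n : ℕ) (S : Finset (Fin m)) : ℤ :=
  (∑ i ∈ S, ((i : ℤ) + 1)) - (n : ℤ) * (m : ℤ) + ((n * (n - 1) / 2 : ℕ) : ℤ)

/-- Coefficients of the ket `||m, n⟩` in the standard basis. -/
def ketCoef (q : ℂ) (m n : ℕ) (c : Fin m → Fin 2) : ℂ :=
  if (oneSet c).card = n then q ^ expKet m n (oneSet c) else 0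

/-- Coefficients of the bra `⟨m, n||` in the standard (bilinear) dual basis. -/
def braCoef (q : ℂ) (m n : ℕ) (c : Fin m → Fin 2) : ℂ :=
  (qbinom q m n)⁻¹ * q ^ ((n : ℤ) * ((m : ℤ) - (n : ℤ))) * ketCoef q m n c

/-- Coefficients of the tilde bra `~⟨m, n||`. -/
def tbraCoef (q : ℂ) (m n : ℕ) (c : Fin m → Fin 2) : ℂ :=
  ((m.choose n : ℂ))⁻¹ *
    (if (oneSet c).card = n then q ^ (-(expKet m n (oneSet c))) else 0)

/-- Coefficients of the tilde ket `~||m, n⟩`. -/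
def tketCoef (q : ℂ) (m n : ℕ) (c : Fin m → Fin 2) : ℂ :=
  qbinom q m n * q ^ (-((n : ℤ) * ((m : ℤ) - (n : ℤ)))) * ((m.choose n : ℂ))⁻¹ *
    (if (oneSet c).card = n then q ^ (-(expKet m n (oneSet c))) else 0)

/-- The projector `P^{(m)} = Σ_{n=0}^{m} ||m,n⟩⟨m,n||` on `(ℂ²)^{⊗m}`. -/
def PlocM (q : ℂ) (m : ℕ) : Matrix (Fin m → Fin 2) (Fin m → Fin 2) ℂ :=
  Matrix.of fun a b => ∑ n ∈ Finset.range (m + 1), ketCoef q m n a * braCoef q m n b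

/-- The projector `~P^{(m)} = Σ_{n=0}^{m} ~||m,n⟩⟨m,n||` on `(ℂ²)^{⊗m}`. -/
def tPlocM (q : ℂ) (m : ℕ) : Matrix (Fin m → Fin 2) (Fin m → Fin 2) ℂ :=
  Matrix.of fun a b => ∑ n ∈ Finset.range (m + 1), tketCoef q m n a * braCoef q m n b

/-!
Both projectors factor through `ℂ^{m+1}`: `P = K Bᵀ` and `~P = K̃ Bᵀ`, where the `n`-th columns
of `K`, `K̃` and `B` are the coefficient vectors of `||m,n⟩`, `~||m,n⟩` and `⟨m,n||`. All four
identities then follow from the biorthogonality `Bᵀ K = Bᵀ K̃ = 1`. For `K̃` this is the count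
`#{S : |S| = n} = C(m,n)`. For `K` it is the generating function
`Σ_{|S| = n} q^{2Σ(S)} = q^{n(m+1)} [m¦n]_q`, proved by the q-Pascal recursion that comes from
splitting off the first tensor factor, together with `q^a [a+b]_q = q^{a+b} [a]_q + [b]_q`.
-/

theorem Matrix.mul_mul_mul_of_mul_eq_one {ι κ R : Type*} [Fintype ι] [Fintype κ]
    [DecidableEq κ] [Semiring R] (K K' : Matrix ι κ R) (B : Matrix κ ι R) (h : B * K' = 1) :
    K * B * (K' * B) = K * B := by
  rw [Matrix.mul_assoc, ← Matrix.mul_assoc B, h, Matrix.one_mul]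

section CoefMatrix

variable {ι R : Type*} [Semiring R] {m : ℕ}

def coefMatrix (m : ℕ) (f : ℕ → ι → R) : Matrix ι (Fin (m + 1)) R := of fun x n => f n x

theorem of_sum_range_eq_coefMatrix_mul_transpose (k b : ℕ → ι → R) :
    of (fun x y => ∑ n ∈ range (m + 1), k n x * b n y) =
      coefMatrix m k * (coefMatrix m b)ᵀ := by
  ext x y
  simp [coefMatrix, Matrix.mul_apply, Finset.sum_range]

theorem transpose_coefMatrix_mul_eq_one [Fintype ι] (b k : ℕ → ι → R)
    (h : ∀ n n', n ≤ m → n' ≤ m → ∑ x, b n x * k n' x = if n = n' then 1 else 0) :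
    (coefMatrix m b)ᵀ * coefMatrix m k = 1 := by
  ext n n'
  simp [coefMatrix, Matrix.mul_apply, Matrix.one_apply, h n n' (by omega) (by omega), Fin.val_inj]

end CoefMatrix

section WeightSum

variable {R : Type*} [CommSemiring R] {m : ℕ}

def weight (c : Fin m → Fin 2) : ℕ := ∑ i ∈ oneSet c, (i + 1 : ℕ)

def weightSum (x : R) (m n : ℕ) : R :=
  ∑ c : Fin m → Fin 2, if (oneSet c).card = n then x ^ weight c else 0

theorem card_oneSet_cons (a : Fin 2) (c : Fin m → Fin 2) :
    (oneSet (Fin.cons a c : Fin (m + 1) → Fin 2)).card = a + (oneSet c).card := by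
  simp only [oneSet, Finset.card_filter, Fin.sum_univ_succ, Fin.cons_zero, Fin.cons_succ]
  fin_cases a <;> simp

theorem weight_cons (a : Fin 2) (c : Fin m → Fin 2) :
    weight (Fin.cons a c : Fin (m + 1) → Fin 2) = a + weight c + (oneSet c).card := by
  simp only [weight, oneSet, Finset.sum_filter, Finset.card_filter, Fin.sum_univ_succ,
    Fin.cons_zero, Fin.cons_succ, Fin.val_zero, Fin.val_succ, ite_add_zero, Finset.sum_add_distrib]
  fin_cases a
  · simp
  · simp; ring

theorem weightSum_succ (x : R) (m n : ℕ) :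
    weightSum x (m + 1) n = ∑ c : Fin m → Fin 2, ∑ a : Fin 2,
      if a + (oneSet c).card = n then x ^ (a + weight c + (oneSet c).card) else 0 := by
  rw [weightSum, ← (Fin.consEquiv fun _ => Fin 2).sum_comp, Fintype.sum_prod_type, Finset.sum_comm]
  refine Finset.sum_congr rfl fun c _ => Finset.sum_congr rfl fun a _ => ?_
  rw [← card_oneSet_cons, ← weight_cons]
  rfl

theorem weightSum_zero_right (x : R) (m : ℕ) : weightSum x m 0 = 1 := by
  induction m with
  | zero => simp [weightSum, oneSet, weight]
  | succ m ih => rw [weightSum_succ, ← ih, weightSum]; simp +contextual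

theorem weightSum_succ_succ (x : R) (m k : ℕ) :
    weightSum x (m + 1) (k + 1) = x ^ (k + 1) * (weightSum x m (k + 1) + weightSum x m k) := by
  rw [weightSum_succ]
  simp only [weightSum, Finset.mul_sum, ← Finset.sum_add_distrib, Fin.sum_univ_two, Fin.val_zero,
    Fin.val_one, zero_add, add_comm 1, Nat.add_right_cancel_iff]
  refine Finset.sum_congr rfl fun c _ => ?_
  split_ifs <;> simp_all [pow_add] <;> ring

theorem weightSum_of_lt (x : R) {m n : ℕ} (h : m < n) : weightSum x m n = 0 :=
  Finset.sum_eq_zero fun c _ =>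
    if_neg (((oneSet c).card_le_univ.trans_eq (Fintype.card_fin m)).trans_lt h).ne

theorem weightSum_one (m n : ℕ) : weightSum (1 : R) m n = m.choose n := by
  induction m generalizing n with
  | zero => cases n <;> simp [weightSum_zero_right, weightSum_of_lt]
  | succ m ih =>
    cases n with
    | zero => simp [weightSum_zero_right]
    | succ k => simp [weightSum_succ_succ, ih, Nat.choose_succ_succ, add_comm]

end WeightSum

section QNumbers

variable {q : ℂ}

theorem qfact_zero (q : ℂ) : qfact q 0 = 1 := prod_range_zero _

theorem qfact_succ (q : ℂ) (n : ℕ) : qfact q (n + 1) = qfact q n * qint q (n + 1) :=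
  prod_range_succ _ _

theorem qint_add (hq0 : q ≠ 0) (a b : ℕ) :
    q ^ a * qint q (a + b) = q ^ (a + b) * qint q a + qint q b := by
  simp only [qint, inv_pow, pow_add]
  field_simp
  ring

theorem pow_sub_inv_pow_ne_zero (hq0 : q ≠ 0) {k : ℕ} (hk : q ^ (2 * k) ≠ 1) :
    q ^ k - q⁻¹ ^ k ≠ 0 := by
  rw [sub_ne_zero, inv_pow]
  intro h
  apply hk
  rw [mul_comm, pow_mul, sq]
  nth_rw 2 [h]
  exact mul_inv_cancel₀ (pow_ne_zero _ hq0)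

theorem qfact_ne_zero (hq0 : q ≠ 0) {m : ℕ} (hq : ∀ k : ℕ, 1 ≤ k → k ≤ m → q ^ (2 * k) ≠ 1)
    {n : ℕ} (hn : n ≤ m) : qfact q n ≠ 0 := by
  refine prod_ne_zero_iff.mpr fun k hk => div_ne_zero ?_ ?_
  · exact pow_sub_inv_pow_ne_zero hq0 (hq (k + 1) k.succ_pos (by simp at hk; omega))
  · simpa using pow_sub_inv_pow_ne_zero hq0 (hq 1 le_rfl (by simp at hk; omega))

theorem qbinom_ne_zero (hq0 : q ≠ 0) {m : ℕ} (hq : ∀ k : ℕ, 1 ≤ k → k ≤ m → q ^ (2 * k) ≠ 1)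
    {n : ℕ} (hn : n ≤ m) : qbinom q m n ≠ 0 :=
  div_ne_zero (qfact_ne_zero hq0 hq le_rfl)
    (mul_ne_zero (qfact_ne_zero hq0 hq (m.sub_le n)) (qfact_ne_zero hq0 hq hn))

theorem weightSum_sq_mul_qfact (hq0 : q ≠ 0) (a b : ℕ) :
    weightSum (q ^ 2) (a + b) b * (qfact q a * qfact q b) =
      q ^ (b * (a + b + 1)) * qfact q (a + b) := by
  induction b generalizing a with
  | zero => simp [weightSum_zero_right, qfact_zero]
  | succ b ihb =>
    induction a with
    | zero =>
      have h := ihb 0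
      simp only [zero_add, qfact_zero, one_mul] at h ⊢
      rw [weightSum_succ_succ, weightSum_of_lt _ (by omega), zero_add, qfact_succ]
      linear_combination (q ^ 2) ^ (b + 1) * qint q (b + 1) * h
    | succ a iha =>
      have h := ihb (a + 1)
      have key := qint_add hq0 (a + 1) (b + 1)
      rw [show a + 1 + b = a + b + 1 by ring] at h
      rw [← add_assoc] at iha
      rw [show a + 1 + (b + 1) = a + b + 1 + 1 by ring] at key ⊢
      rw [weightSum_succ_succ, qfact_succ q (a + b + 1)]
      rw [qfact_succ q a] at h ⊢
      rw [qfact_succ q b] at iha ⊢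
      linear_combination (q ^ 2) ^ (b + 1) * qint q (a + 1) * iha
        + (q ^ 2) ^ (b + 1) * qint q (b + 1) * h
        - q ^ (2 * (b + 1) + b * (a + b + 2)) * qfact q (a + b + 1) * key

theorem weightSum_sq_eq_qbinom (hq0 : q ≠ 0) {m : ℕ}
    (hq : ∀ k : ℕ, 1 ≤ k → k ≤ m → q ^ (2 * k) ≠ 1) {n : ℕ} (hn : n ≤ m) :
    weightSum (q ^ 2) m n = q ^ (n * (m + 1)) * qbinom q m n := by
  obtain ⟨a, rfl⟩ := Nat.exists_eq_add_of_le' hn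
  rw [qbinom, mul_div_assoc', eq_div_iff, Nat.add_sub_cancel, weightSum_sq_mul_qfact hq0]
  exact mul_ne_zero (qfact_ne_zero hq0 hq (by omega)) (qfact_ne_zero hq0 hq hn)

end QNumbers

section Pairing

variable {q : ℂ} {m : ℕ}

theorem two_mul_expKet (n : ℕ) (c : Fin m → Fin 2) :
    2 * expKet m n (oneSet c) = 2 * weight c + ((n : ℤ) * n - n - 2 * n * m) := by
  have h : ((n * (n - 1) / 2 : ℕ) : ℤ) * 2 = n * n - n := by
    have h2 := Nat.div_mul_cancel (Nat.even_mul_pred_self n).two_dvd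
    rcases n with _ | n
    · simp
    · zify at h2
      push_cast at h2 ⊢
      rw [h2]
      ring
  simp only [expKet, weight, Nat.cast_sum, Nat.cast_add, Nat.cast_one]
  linear_combination h

theorem sum_ketCoef_mul_self (hq0 : q ≠ 0) (n : ℕ) :
    ∑ c, ketCoef q m n c * ketCoef q m n c =
      q ^ ((n : ℤ) * n - n - 2 * n * m) * weightSum (q ^ 2) m n := by
  rw [weightSum, mul_sum]
  refine sum_congr rfl fun c _ => ?_
  unfold ketCoef
  split_ifs
  · rw [← zpow_add₀ hq0, ← two_mul, two_mul_expKet, zpow_add₀ hq0, ← zpow_natCast, ← zpow_natCast,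
      ← _root_.zpow_mul]
    push_cast
    ring
  · simp

theorem sum_braCoef_mul_ketCoef (hq0 : q ≠ 0) (hq : ∀ k : ℕ, 1 ≤ k → k ≤ m → q ^ (2 * k) ≠ 1)
    {n n' : ℕ} (hn : n ≤ m) :
    ∑ c, braCoef q m n c * ketCoef q m n' c = if n = n' then 1 else 0 := by
  split_ifs with h
  · subst h
    simp only [braCoef, mul_assoc, ← mul_sum, sum_ketCoef_mul_self hq0,
      weightSum_sq_eq_qbinom hq0 hq hn]
    have hexp : q ^ ((n : ℤ) * (m - n)) * (q ^ ((n : ℤ) * n - n - 2 * (n * m)) *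
        q ^ (n * (m + 1))) = 1 := by
      rw [← zpow_natCast, ← zpow_add₀ hq0, ← zpow_add₀ hq0]
      push_cast
      ring_nf
      exact zpow_zero q
    linear_combination ((qbinom q m n)⁻¹ * qbinom q m n) * hexp +
      inv_mul_cancel₀ (qbinom_ne_zero hq0 hq hn)
  · refine sum_eq_zero fun c _ => ?_
    simp only [braCoef, ketCoef]
    split_ifs <;> simp_all

theorem sum_braCoef_mul_tketCoef (hq0 : q ≠ 0) (hq : ∀ k : ℕ, 1 ≤ k → k ≤ m → q ^ (2 * k) ≠ 1)
    {n n' : ℕ} (hn : n ≤ m) :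
    ∑ c, braCoef q m n c * tketCoef q m n' c = if n = n' then 1 else 0 := by
  split_ifs with h
  · subst h
    have hb := qbinom_ne_zero hq0 hq hn
    have hterm : ∀ c, braCoef q m n c * tketCoef q m n c =
        (m.choose n : ℂ)⁻¹ * if (oneSet c).card = n then 1 ^ weight c else 0 := by
      intro c
      simp only [braCoef, tketCoef, ketCoef, one_pow]
      split_ifs
      · rw [_root_.zpow_neg, _root_.zpow_neg]
        field_simp
      · simp
    rw [sum_congr rfl fun c _ => hterm c, ← mul_sum, ← weightSum, weightSum_one]
    exact inv_mul_cancel₀ (Nat.cast_ne_zero.mpr (Nat.choose_pos hn).ne')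
  · refine sum_eq_zero fun c _ => ?_
    simp only [braCoef, ketCoef, tketCoef]
    split_ifs <;> simp_all

end Pairing

/-- Idempotency and compatibility of the projectors `P^{(m)}` and `~P^{(m)}`. -/
theorem statement12 (q : ℂ) (hq0 : q ≠ 0) (m : ℕ)
    (hq : ∀ k : ℕ, 1 ≤ k → k ≤ m → q ^ (2 * k) ≠ 1) :
    (PlocM q m * PlocM q m = PlocM q m) ∧
    (tPlocM q m * tPlocM q m = tPlocM q m) ∧
    (PlocM q m * tPlocM q m = PlocM q m) ∧
    (tPlocM q m * PlocM q m = tPlocM q m) := by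
  have hP : PlocM q m = coefMatrix m (ketCoef q m) * (coefMatrix m (braCoef q m))ᵀ :=
    of_sum_range_eq_coefMatrix_mul_transpose _ _
  have htP : tPlocM q m = coefMatrix m (tketCoef q m) * (coefMatrix m (braCoef q m))ᵀ :=
    of_sum_range_eq_coefMatrix_mul_transpose _ _
  have hK := transpose_coefMatrix_mul_eq_one (braCoef q m) (ketCoef q m)
    fun _ _ hn _ => sum_braCoef_mul_ketCoef hq0 hq hn
  have htK := transpose_coefMatrix_mul_eq_one (braCoef q m) (tketCoef q m)
    fun _ _ hn _ => sum_braCoef_mul_tketCoef hq0 hq hn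
  rw [hP, htP]
  exact ⟨Matrix.mul_mul_mul_of_mul_eq_one _ _ _ hK, Matrix.mul_mul_mul_of_mul_eq_one _ _ _ htK,
    Matrix.mul_mul_mul_of_mul_eq_one _ _ _ htK, Matrix.mul_mul_mul_of_mul_eq_one _ _ _ hK⟩
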